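/- arXiv:1706.02830 — 6 statements merged into one kernel-verified Lean document; each statement's English description precedes it below -/
import Mathlib

section
/- For every n, the number of triangles in any simple graph G on n vertices that contains no cycle of length 5 as a subgraph is at most the maximum number of edges in a simple graph on n vertices that contains neither a cycle of length 4 nor a cycle of length 5 as a subgraph. -/
/-!
In a `C5`-free graph a vertex adjacent to two vertices of a 4-clique lies in it, so two 4-cliques
sharing an edge coincide; and a triangle in no 4-clique has at most one edge lying in a second
triangle, since two such edges would close a pentagon. Charge every triangle to an edge: the four
triangles of a 4-clique `K` injectively to four edges of `K` forming a triangle with a pendant edge,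
and every other triangle to one of its edges lying in no other triangle. The charged edges form a
subgraph `H` of `G` with as many edges as `G` has triangles, and `H` is `C4`-free: in a 4-cycle of
`H` one diagonal is an edge of `G` (otherwise the third vertex of a triangle through a cycle edge
closes a pentagon), so either the cycle spans a 4-clique, whose charged edges contain no 4-cycle,
or two consecutive cycle edges are both charged to the same triangle.
-/

/-- A graph is `C5`-free if it contains no cycle of length 5 as a subgraph. -/
def C5Free {V : Type*} (G : SimpleGraph V) : Prop :=
  ∀ (v : V) (w : G.Walk v v), w.IsCycle → w.length ≠ 5

/-- A graph is `C4`-free if it contains no cycle of length 4 as a subgraph. -/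
def C4Free {V : Type*} (G : SimpleGraph V) : Prop :=
  ∀ (v : V) (w : G.Walk v v), w.IsCycle → w.length ≠ 4

open SimpleGraph

variable {V : Type*} {G H : SimpleGraph V}

def QuadFree (H : SimpleGraph V) : Prop :=
  ∀ ⦃w x y z : V⦄, H.Adj w x → H.Adj x y → H.Adj y z → H.Adj z w → w ≠ y → x ≠ z →
    False

theorem QuadFree.c4Free (hH : QuadFree H) : C4Free H := by
  intro v w hw hlen
  have hadj (i : ℕ) (hi : i < 4 := by omega) : H.Adj (w.getVert i) (w.getVert (i + 1)) :=
    w.adj_getVert_succ (hlen ▸ hi)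
  have hne (i j : ℕ) (hi : 1 ≤ i ∧ i ≤ 4 := by omega) (hj : 1 ≤ j ∧ j ≤ 4 := by omega)
      (hij : i ≠ j := by omega) : w.getVert i ≠ w.getVert j :=
    fun h ↦ hij (hw.getVert_injOn (by simpa [hlen] using hi) (by simpa [hlen] using hj) h)
  have h4 : w.getVert 4 = w.getVert 0 := by rw [← hlen, Walk.getVert_length, Walk.getVert_zero]
  refine hH (hadj 0) (hadj 1) (hadj 2) (h4 ▸ hadj 3) ?_ (hne 1 3)
  rw [← h4]
  exact hne 4 2

theorem C5Free.anti (hGH : H ≤ G) (hG : C5Free G) : C5Free H := fun v w hw ↦ by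
  simpa using hG v (w.mapLe hGH) (hw.mapLe hGH)

theorem C5Free.false_of_pentagon (hG : C5Free G) {a b c d e : V} (hab : G.Adj a b)
    (hbc : G.Adj b c) (hcd : G.Adj c d) (hde : G.Adj d e) (hea : G.Adj e a) (hac : a ≠ c)
    (had : a ≠ d) (hbd : b ≠ d) (hbe : b ≠ e) (hce : c ≠ e) : False := by
  refine hG a (.cons hab (.cons hbc (.cons hcd (.cons hde (.cons hea .nil))))) ?_ rfl
  simp only [Walk.cons_isCycle_iff, Walk.cons_isPath_iff, Walk.IsPath.nil, Walk.edges_cons,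
    Walk.support_cons, Walk.support_nil, Walk.edges_nil, List.mem_cons, List.not_mem_nil,
    Sym2.eq_iff]
  have := hab.ne; have := hbc.ne; have := hcd.ne; have := hde.ne; have := hea.ne
  grind

theorem C5Free.eq_or_eq_of_adj (hG : C5Free G) {w x y z r : V} (hwx : G.Adj w x)
    (hxy : G.Adj x y) (hyz : G.Adj y z) (hzw : G.Adj z w) (hwy : w ≠ y) (hxz : x ≠ z)
    (hrw : G.Adj r w) (hrx : G.Adj r x) : r = y ∨ r = z := by
  by_contra! h
  exact hG.false_of_pentagon hrw hzw.symm hyz.symm hxy.symm hrx.symm h.2 h.1 hwy hwx.ne hxz.symm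

theorem C5Free.mem_of_adj_of_adj [DecidableEq V] (hG : C5Free G) {K : Finset V}
    (hK : G.IsNClique 4 K) {p q z : V} (hp : p ∈ K) (hq : q ∈ K) (hpq : p ≠ q)
    (hzp : G.Adj z p) (hzq : G.Adj z q) : z ∈ K := by
  by_contra hz
  have hcard : ((K.erase p).erase q).card = 2 := by
    rw [Finset.card_erase_of_mem (by simp [hq, hpq.symm]), Finset.card_erase_of_mem hp, hK.2]
  obtain ⟨a, b, hab, hK'⟩ := Finset.card_eq_two.mp hcard
  have ha : a ∈ (K.erase p).erase q := by simp [hK']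
  have hb : b ∈ (K.erase p).erase q := by simp [hK']
  simp only [Finset.mem_erase] at ha hb
  exact hG.false_of_pentagon hzp (hK.1 hp ha.2.2 (Ne.symm ha.2.1)) (hK.1 ha.2.2 hb.2.2 hab)
    (hK.1 hb.2.2 hq hb.1) hzq.symm (fun h ↦ hz (h ▸ ha.2.2)) (fun h ↦ hz (h ▸ hb.2.2))
    (Ne.symm hb.2.1) hpq ha.1

theorem C5Free.eq_of_isNClique_four_of_mem_sym2 [DecidableEq V] (hG : C5Free G)
    {K K' : Finset V} (hK : G.IsNClique 4 K) (hK' : G.IsNClique 4 K') {e : Sym2 V}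
    (he : ¬ e.IsDiag) (heK : e ∈ K.sym2) (heK' : e ∈ K'.sym2) : K = K' := by
  induction e using Sym2.ind with
  | _ p q =>
  simp only [Finset.mk_mem_sym2_iff, Sym2.mk_isDiag_iff] at he heK heK'
  refine Finset.eq_of_subset_of_card_le (fun y hy ↦ ?_) (by rw [hK.2, hK'.2])
  by_cases hyp : y = p
  · exact hyp ▸ heK'.1
  by_cases hyq : y = q
  · exact hyq ▸ heK'.2
  exact hG.mem_of_adj_of_adj hK' heK'.1 heK'.2 he (hK.1 hy heK.1 hyp) (hK.1 hy heK.2 hyq)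

structure IsC4FreeLabeling (K : Finset V) (g : V → Sym2 V) : Prop where
  injOn : Set.InjOn g K
  mem_sym2 : ∀ p ∈ K, g p ∈ K.sym2
  not_isDiag : ∀ p ∈ K, ¬ (g p).IsDiag
  quadFree : QuadFree (fromEdgeSet (g '' K))

theorem exists_isC4FreeLabeling {K : Finset V} (hcard : K.card = 4) :
    ∃ g : V → Sym2 V, IsC4FreeLabeling K g := by
  classical
  obtain ⟨a, b, c, d, hab, hac, had, hbc, hbd, hcd, hK⟩ := Finset.card_eq_four.mp hcard
  have hmemK : ∀ {p}, p ∈ K ↔ p = a ∨ p = b ∨ p = c ∨ p = d := by simp [hK]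
  -- the triangle `abc` together with the pendant edge `ad`
  set g : V → Sym2 V := fun p ↦
    if p = a then s(b, c) else if p = b then s(a, c) else if p = c then s(a, b) else s(a, d)
  have ga : g a = s(b, c) := by simp [g]
  have gb : g b = s(a, c) := by simp [g, hab.symm]
  have gc : g c = s(a, b) := by simp [g, hac.symm, hbc.symm]
  have gd : g d = s(a, d) := by simp [g, had.symm, hbd.symm, hcd.symm]
  clear_value g
  have hg : ∀ p ∈ K, g p = s(b, c) ∨ g p = s(a, c) ∨ g p = s(a, b) ∨ g p = s(a, d) := by
    intro p hp
    rcases hmemK.mp hp with rfl | rfl | rfl | rfl <;> simp [*]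
  have hmem_of_mem : ∀ p ∈ K, ∀ u ∈ g p, u ∈ K := by
    intro p hp u hu
    rw [hmemK]
    rcases hg p hp with h | h | h | h <;> rw [h, Sym2.mem_iff] at hu <;> tauto
  refine ⟨g, ?_, fun p hp ↦ Finset.mem_sym2_iff.mpr (hmem_of_mem p hp), ?_, ?_⟩
  · intro p hp q hq hpq
    rcases hmemK.mp hp with rfl | rfl | rfl | rfl <;>
      rcases hmemK.mp hq with rfl | rfl | rfl | rfl <;>
      first | rfl | (simp only [ga, gb, gc, gd, Sym2.eq_iff] at hpq; grind)
  · intro p hp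
    rcases hg p hp with h | h | h | h <;> simp [*]
  · have hadj : ∀ ⦃u v⦄, (fromEdgeSet (g '' K)).Adj u v → ∃ p ∈ K, g p = s(u, v) :=
      fun _ _ huv ↦ huv.1
    have hK : ∀ ⦃u v⦄, (fromEdgeSet (g '' K)).Adj u v → u ∈ K := by
      intro u v huv
      obtain ⟨p, hp, hpu⟩ := hadj huv
      exact hmem_of_mem p hp u (hpu ▸ Sym2.mem_mk_left u v)
    have hd : ∀ ⦃u⦄, (fromEdgeSet (g '' K)).Adj d u → u = a := by
      intro u hu
      obtain ⟨p, hp, hpu⟩ := hadj hu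
      rcases hg p hp with h | h | h | h <;> rw [h, Sym2.eq_iff] at hpu <;> grind
    intro w x y z hwx hxy hyz hzw hwy hxz
    have hcover : ({w, x, y, z} : Finset V) = K :=
      Finset.eq_of_subset_of_card_le
        (by simp [Finset.insert_subset_iff, hK hwx, hK hxy, hK hyz, hK hzw])
        (by rw [hcard, Finset.card_eq_four.mpr
          ⟨w, x, y, z, hwx.ne, hwy, hzw.ne', hxy.ne, hxz, hyz.ne, rfl⟩])
    have hdmem : d ∈ ({w, x, y, z} : Finset V) := by simp [hcover, hmemK]
    simp only [Finset.mem_insert, Finset.mem_singleton] at hdmem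
    rcases hdmem with rfl | rfl | rfl | rfl
    · exact hxz ((hd hwx).trans (hd hzw.symm).symm)
    · exact hwy ((hd hwx.symm).trans (hd hxy).symm)
    · exact hxz ((hd hxy.symm).trans (hd hyz).symm)
    · exact hwy ((hd hzw).trans (hd hyz.symm).symm)

noncomputable def c4FreeLabeling (K : Finset V) : V → Sym2 V :=
  if h : K.card = 4 then (exists_isC4FreeLabeling h).choose else fun p ↦ s(p, p)

theorem isC4FreeLabeling_c4FreeLabeling {K : Finset V} (hK : K.card = 4) :
    IsC4FreeLabeling K (c4FreeLabeling K) := by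
  rw [c4FreeLabeling, dif_pos hK]
  exact (exists_isC4FreeLabeling hK).choose_spec

namespace SimpleGraph.IsClique

variable {s t : Finset V} {e : Sym2 V}

theorem mem_edgeSet_of_mem_sym2 (hs : G.IsClique (s : Set V)) (he : e ∈ s.sym2)
    (hd : ¬ e.IsDiag) : e ∈ G.edgeSet := by
  induction e using Sym2.ind with
  | _ u v =>
  rw [Finset.mk_mem_sym2_iff] at he
  exact hs he.1 he.2 hd

theorem exists_adj_of_mem_sym2 (hs : G.IsClique (s : Set V)) (hcard : 2 < s.card)
    (he : e ∈ s.sym2) : ∃ r, ∀ u ∈ e, G.Adj r u := by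
  classical
  induction e using Sym2.ind with
  | _ u v =>
  obtain ⟨r, hr, hruv⟩ := Finset.exists_mem_notMem_of_card_lt_card
    (s := {u, v}) (t := s) (Finset.card_le_two.trans_lt hcard)
  rw [Finset.mk_mem_sym2_iff] at he
  simp only [Finset.mem_insert, Finset.mem_singleton, not_or] at hruv
  refine ⟨r, fun w hw ↦ ?_⟩
  rcases Sym2.mem_iff.mp hw with rfl | rfl
  exacts [hs hr he.1 hruv.1, hs hr he.2 hruv.2]

theorem subset_of_mem_sym2 (hs : G.IsClique (s : Set V)) (he : e ∈ s.sym2) (het : e ∈ t.sym2)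
    (ht : ∀ z, (∀ u ∈ e, G.Adj z u) → z ∈ t) : s ⊆ t := by
  intro y hy
  by_cases hye : y ∈ e
  · exact Finset.mem_sym2_iff.mp het y hye
  · exact ht y fun u hu ↦ hs hy (Finset.mem_sym2_iff.mp he u hu) fun h ↦ hye (h ▸ hu)

end SimpleGraph.IsClique

def IsPrivateEdge (G : SimpleGraph V) (t : Finset V) (e : Sym2 V) : Prop :=
  e ∈ t.sym2 ∧ ¬ e.IsDiag ∧ ∀ z, (∀ u ∈ e, G.Adj z u) → z ∈ t

theorem IsPrivateEdge.card_le {t s : Finset V} {e : Sym2 V} {n : ℕ} (h : IsPrivateEdge G t e)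
    (hs : G.IsNClique n s) (he : e ∈ s.sym2) : n ≤ t.card :=
  hs.2 ▸ Finset.card_le_card (hs.1.subset_of_mem_sym2 he h.1 h.2.2)

section Representative

variable [DecidableEq V] {t t' : Finset V} {e : Sym2 V}

theorem C5Free.exists_isPrivateEdge (hG : C5Free G) (ht : G.IsNClique 3 t)
    (hK : ¬ ∃ x, ∀ y ∈ t, G.Adj x y) : ∃ e, IsPrivateEdge G t e := by
  obtain ⟨a, b, c, hab, hac, hbc, rfl⟩ := is3Clique_iff.mp ht
  by_cases hpriv : ∀ z, G.Adj z a → G.Adj z b → z = c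
  · refine ⟨s(a, b), by simp, hab.ne, fun z hz ↦ ?_⟩
    simp [hpriv z (hz a (Sym2.mem_mk_left a b)) (hz b (Sym2.mem_mk_right a b))]
  push Not at hpriv
  obtain ⟨z, hza, hzb, hzc⟩ := hpriv
  refine ⟨s(a, c), by simp, hac.ne, fun y hy ↦ ?_⟩
  have hya := hy a (Sym2.mem_mk_left a c)
  have hyc := hy c (Sym2.mem_mk_right a c)
  suffices y = b by simp [this]
  by_contra hyb
  by_cases hyz : y = z
  · subst hyz
    exact hK ⟨y, by simp [hya, hzb, hyc]⟩
  · exact hG.false_of_pentagon hzb.symm hza hya.symm hyc hbc.symm hab.ne' (Ne.symm hyb)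
      (Ne.symm hyz) hzc hac.ne

def RepresentsTriangle (G : SimpleGraph V) (t : Finset V) (e : Sym2 V) : Prop :=
  (∃ K, G.IsNClique 4 K ∧ ∃ x ∈ K, K.erase x = t ∧ e = c4FreeLabeling K x) ∨
    IsPrivateEdge G t e

theorem C5Free.exists_representsTriangle (hG : C5Free G) (ht : G.IsNClique 3 t) :
    ∃ e, RepresentsTriangle G t e := by
  by_cases hK : ∃ x, ∀ y ∈ t, G.Adj x y
  · obtain ⟨x, hx⟩ := hK
    have hxt : x ∉ t := fun h ↦ (hx x h).ne rfl
    exact ⟨_, .inl ⟨insert x t, ht.insert hx, x, t.mem_insert_self x, t.erase_insert hxt,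
      rfl⟩⟩
  · obtain ⟨e, he⟩ := hG.exists_isPrivateEdge ht hK
    exact ⟨e, .inr he⟩

theorem RepresentsTriangle.exists_isClique (ht : G.IsNClique 3 t)
    (h : RepresentsTriangle G t e) :
    ∃ s : Finset V, G.IsClique (s : Set V) ∧ 2 < s.card ∧ e ∈ s.sym2 ∧ ¬ e.IsDiag := by
  rcases h with ⟨K, hK, x, hx, -, rfl⟩ | ⟨he, hd, -⟩
  · have hL := isC4FreeLabeling_c4FreeLabeling hK.2
    exact ⟨K, hK.1, by rw [hK.2]; norm_num, hL.mem_sym2 x hx, hL.not_isDiag x hx⟩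
  · exact ⟨t, ht.1, by rw [ht.2]; norm_num, he, hd⟩

theorem RepresentsTriangle.mem_edgeSet (ht : G.IsNClique 3 t) (h : RepresentsTriangle G t e) :
    e ∈ G.edgeSet := by
  obtain ⟨s, hs, -, he, hd⟩ := h.exists_isClique ht
  exact hs.mem_edgeSet_of_mem_sym2 he hd

theorem RepresentsTriangle.exists_adj (ht : G.IsNClique 3 t) (h : RepresentsTriangle G t e) :
    ∃ r, ∀ u ∈ e, G.Adj r u := by
  obtain ⟨s, hs, hcard, he, -⟩ := h.exists_isClique ht
  exact hs.exists_adj_of_mem_sym2 hcard he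

theorem C5Free.eq_of_representsTriangle (hG : C5Free G) (ht : G.IsNClique 3 t)
    (ht' : G.IsNClique 3 t') (h : RepresentsTriangle G t e) (h' : RepresentsTriangle G t' e) :
    t = t' := by
  rcases h with ⟨K, hK, x, hx, rfl, rfl⟩ | hp <;>
    rcases h' with ⟨K', hK', x', hx', rfl, he⟩ | hp'
  · have hL := isC4FreeLabeling_c4FreeLabeling hK.2
    obtain rfl : K = K' := hG.eq_of_isNClique_four_of_mem_sym2 hK hK' (hL.not_isDiag x hx)
      (hL.mem_sym2 x hx) (he ▸ (isC4FreeLabeling_c4FreeLabeling hK'.2).mem_sym2 x' hx')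
    rw [hL.injOn hx hx' he]
  · have := hp'.card_le hK ((isC4FreeLabeling_c4FreeLabeling hK.2).mem_sym2 x hx)
    rw [ht'.2] at this
    omega
  · have := hp.card_le hK' (he ▸ (isC4FreeLabeling_c4FreeLabeling hK'.2).mem_sym2 x' hx')
    rw [ht.2] at this
    omega
  · exact Finset.eq_of_subset_of_card_le (ht.1.subset_of_mem_sym2 hp.1 hp'.1 hp'.2.2)
      (by rw [ht.2, ht'.2])

theorem C5Free.mem_image_c4FreeLabeling (hG : C5Free G) (ht : G.IsNClique 3 t) {u v : V}
    (h : RepresentsTriangle G t s(u, v)) {K : Finset V} (hK : G.IsNClique 4 K) (hu : u ∈ K)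
    (hv : v ∈ K) : s(u, v) ∈ c4FreeLabeling K '' K := by
  rcases h with ⟨K', hK', x, hx, -, he⟩ | hp
  · have hL := isC4FreeLabeling_c4FreeLabeling hK'.2
    obtain rfl : K' = K := hG.eq_of_isNClique_four_of_mem_sym2 hK' hK
      (he ▸ hL.not_isDiag x hx) (he ▸ hL.mem_sym2 x hx) (by simp [hu, hv])
    exact ⟨x, hx, he.symm⟩
  · have := hp.card_le hK (by simp [hu, hv])
    rw [ht.2] at this
    omega

theorem C5Free.eq_of_representsTriangle_of_not_adj (hG : C5Free G) (ht : G.IsNClique 3 t)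
    {u v y z : V} (h : RepresentsTriangle G t s(u, v)) (hyu : G.Adj y u) (hyv : G.Adj y v)
    (hzu : G.Adj z u) (hzy : G.Adj z y) (hvz : v ≠ z) (hnvz : ¬ G.Adj v z) :
    t = {u, v, y} := by
  rcases h with ⟨K, hK, x, hx, -, he⟩ | ⟨he, hd, hpriv⟩
  · have hL := isC4FreeLabeling_c4FreeLabeling hK.2
    have huvK := he ▸ hL.mem_sym2 x hx
    have huv : u ≠ v := by simpa [← he] using hL.not_isDiag x hx
    rw [Finset.mk_mem_sym2_iff] at huvK
    have hyK := hG.mem_of_adj_of_adj hK huvK.1 huvK.2 huv hyu hyv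
    have hzK := hG.mem_of_adj_of_adj hK huvK.1 hyK hyu.ne' hzu hzy
    exact absurd (hK.1 huvK.2 hzK hvz) hnvz
  · rw [Finset.mk_mem_sym2_iff] at he
    have hyt : y ∈ t := hpriv y (by simp [hyu, hyv])
    refine (Finset.eq_of_subset_of_card_le
      (by simp [Finset.insert_subset_iff, he, hyt]) ?_).symm
    rw [ht.2, Finset.card_eq_three.mpr ⟨u, v, y, by simpa using hd, hyu.ne', hyv.ne', rfl⟩]

theorem C5Free.quadFree_fromEdgeSet_range (hG : C5Free G) {f : G.cliqueSet 3 → Sym2 V}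
    (hf : ∀ t : G.cliqueSet 3, RepresentsTriangle G t (f t)) :
    QuadFree (fromEdgeSet (Set.range f)) := by
  set H := fromEdgeSet (Set.range f)
  have hrep {u v : V} (huv : H.Adj u v) :
      ∃ t : G.cliqueSet 3, RepresentsTriangle G t s(u, v) ∧ f t = s(u, v) := by
    obtain ⟨t, ht⟩ := Set.mem_range.mp huv.1
    exact ⟨t, ht ▸ hf t, ht⟩
  have hHG {u v : V} (huv : H.Adj u v) : G.Adj u v := by
    obtain ⟨t, ht, -⟩ := hrep huv
    exact ht.mem_edgeSet t.2
  suffices key : ∀ ⦃w x y z⦄, H.Adj w x → H.Adj x y → H.Adj y z → H.Adj z w → w ≠ y →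
      x ≠ z → G.Adj w y → False by
    intro w x y z hwx hxy hyz hzw hwy hxz
    obtain ⟨t, ht, -⟩ := hrep hwx
    obtain ⟨r, hr⟩ := ht.exists_adj t.2
    have hrw := hr w (Sym2.mem_mk_left w x)
    have hrx := hr x (Sym2.mem_mk_right w x)
    rcases hG.eq_or_eq_of_adj (hHG hwx) (hHG hxy) (hHG hyz) (hHG hzw) hwy hxz hrw hrx
      with rfl | rfl
    · exact key hwx hxy hyz hzw hwy hxz hrw.symm
    · exact key hxy hyz hzw hwx hxz hwy.symm hrx.symm
  intro w x y z hwx hxy hyz hzw hwy hxz hwy'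
  by_cases hxz' : G.Adj x z
  · set K : Finset V := {w, x, y, z}
    have hK : G.IsNClique 4 K := (is3Clique_triple_iff.mpr ⟨hHG hxy, hxz', hHG hyz⟩).insert
      (by simp [hHG hwx, hwy', (hHG hzw).symm])
    have hlabel {u v : V} (huv : H.Adj u v) (hu : u ∈ K) (hv : v ∈ K) :
        (fromEdgeSet (c4FreeLabeling K '' K)).Adj u v := by
      obtain ⟨t, ht, -⟩ := hrep huv
      exact ⟨hG.mem_image_c4FreeLabeling t.2 ht hK hu hv, huv.ne⟩
    exact (isC4FreeLabeling_c4FreeLabeling hK.2).quadFree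
      (hlabel hwx (by simp [K]) (by simp [K])) (hlabel hxy (by simp [K]) (by simp [K]))
      (hlabel hyz (by simp [K]) (by simp [K])) (hlabel hzw (by simp [K]) (by simp [K])) hwy hxz
  · obtain ⟨t₁, ht₁, hf₁⟩ := hrep hwx
    obtain ⟨t₂, ht₂, hf₂⟩ := hrep hxy.symm
    have h₁ := hG.eq_of_representsTriangle_of_not_adj t₁.2 ht₁ hwy'.symm (hHG hxy).symm
      (hHG hzw) (hHG hyz).symm hxz hxz'
    have h₂ := hG.eq_of_representsTriangle_of_not_adj t₂.2 ht₂ hwy' (hHG hwx) (hHG hyz).symm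
      (hHG hzw) hxz hxz'
    have : t₁ = t₂ := Subtype.ext (by rw [h₁, h₂]; ext; simp; tauto)
    rw [this, hf₂, Sym2.eq_iff] at hf₁
    grind

end Representative

theorem C5Free.exists_c4Free_le_ncard_cliqueSet [Finite V] (hG : C5Free G) :
    ∃ H ≤ G, C4Free H ∧ (G.cliqueSet 3).ncard ≤ H.edgeSet.ncard := by
  classical
  choose f hf using fun t : G.cliqueSet 3 ↦ hG.exists_representsTriangle t.2
  have hinj : Function.Injective f := fun t t' h ↦
    Subtype.ext (hG.eq_of_representsTriangle t.2 t'.2 (hf t) (h ▸ hf t'))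
  have hedge (t : G.cliqueSet 3) : f t ∈ G.edgeSet := (hf t).mem_edgeSet t.2
  refine ⟨fromEdgeSet (Set.range f), ?_, (hG.quadFree_fromEdgeSet_range hf).c4Free, ?_⟩
  · rw [fromEdgeSet_le]
    exact fun e ⟨⟨t, he⟩, _⟩ ↦ he ▸ hedge t
  · calc (G.cliqueSet 3).ncard = (Set.range f).ncard :=
          (Set.ncard_range_of_injective hinj).symm
      _ ≤ _ := Set.ncard_le_ncard fun e ⟨t, he⟩ ↦
          by simpa [← he] using G.not_isDiag_of_mem_edgeSet (hedge t)

theorem triangles_le_max_C4C5_free_edges (n : ℕ) (G : SimpleGraph (Fin n))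
    (hG : C5Free G) :
    {t : Finset (Fin n) | G.IsNClique 3 t}.ncard ≤
      sSup {m : ℕ | ∃ H : SimpleGraph (Fin n), C4Free H ∧ C5Free H ∧ H.edgeSet.ncard = m} := by
  obtain ⟨H, hHG, hH, hcard⟩ := hG.exists_c4Free_le_ncard_cliqueSet
  refine le_csSup_of_le ⟨Nat.card (Sym2 (Fin n)), ?_⟩ ⟨H, hH, hG.anti hHG, rfl⟩ hcard
  rintro _ ⟨H', -, -, rfl⟩
  exact Set.ncard_le_card _
end

section
/- Let G be a simple graph that contains no cycle of length 5 as a subgraph and in which every edge is contained in at least one triangle. Then every block of G is either a crown-block or a K4-block; that is, for every block B, either all triangles in B contain a common edge ab (crown-block), or B consists exactly of the four triangles of a complete graph K4 on four vertices of G (K4-block). -/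
/-- Two triangles of `G` lie in the same block if they are connected by a chain of
triangles of `G` in which any two consecutive triangles share two vertices (an edge). -/
def SameBlock {V : Type*} [DecidableEq V] (G : SimpleGraph V) (T T' : Finset V) : Prop :=
  Relation.ReflTransGen
    (fun A B => G.IsNClique 3 A ∧ G.IsNClique 3 B ∧ 2 ≤ (A ∩ B).card) T T'

/-!
If the triangle `abc` lies in a `K4` `abcd`, its block consists of the four triangles of `abcd`:
a vertex `w` outside a `K4` adjacent to two of its vertices `p, q` would close the 5-cycle
`w p r s q` through the other two vertices `r, s`.

Otherwise, suppose the edge `ab` lies in two triangles, and let `abx` be any triangle on `ab`.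
A triangle `axw` with `w ≠ b` forces `w = y` for the third vertex `y ≠ x` of another triangle
`aby` (else `a w x b y` is a 5-cycle), so `abxy` is a `K4`; then `c ∈ {x, y}` (else `c a x y b`
is a 5-cycle), and `abc` would lie in a `K4`. Hence every triangle of the block contains `ab`.
If no edge of `abc` lies in a second triangle, `abc` is alone in its block.
-/

open Finset SimpleGraph

section

variable {V : Type*} {G : SimpleGraph V}

theorem C5Free.false_of_five_cycle (hC5 : C5Free G) {v₁ v₂ v₃ v₄ v₅ : V}
    (h₁₂ : G.Adj v₁ v₂) (h₂₃ : G.Adj v₂ v₃) (h₃₄ : G.Adj v₃ v₄) (h₄₅ : G.Adj v₄ v₅)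
    (h₅₁ : G.Adj v₅ v₁) (h₁₃ : v₁ ≠ v₃) (h₁₄ : v₁ ≠ v₄) (h₂₄ : v₂ ≠ v₄) (h₂₅ : v₂ ≠ v₅)
    (h₃₅ : v₃ ≠ v₅) : False := by
  refine hC5 v₁ (.cons h₁₂ (.cons h₂₃ (.cons h₃₄ (.cons h₄₅ (.cons h₅₁ .nil))))) ?_ rfl
  simp [Walk.isCycle_def, Walk.isTrail_def, Sym2.eq, Sym2.rel_iff', h₁₂.ne, h₂₃.ne, h₃₄.ne,
    h₄₅.ne, h₅₁.ne, h₁₂.ne', h₅₁.ne', h₁₃, h₁₄, h₂₄, h₂₅, h₃₅, h₁₃.symm, h₁₄.symm]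

theorem C5Free.eq_of_adj_of_adj (hC5 : C5Free G) {a b x y w : V} (hab : G.Adj a b)
    (hax : G.Adj a x) (hbx : G.Adj b x) (hay : G.Adj a y) (hby : G.Adj b y) (hxy : x ≠ y)
    (hnxy : ¬G.Adj x y) (haw : G.Adj a w) (hxw : G.Adj x w) : w = b := by
  by_contra hwb
  exact hC5.false_of_five_cycle haw hxw.symm hbx.symm hby hay.symm hax.ne hab.ne hwb
    (by rintro rfl; exact hnxy hxw) hxy

theorem C5Free.not_adj_of_common_neighbors (hC5 : C5Free G) {a b c x y : V} (hab : G.Adj a b)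
    (hac : G.Adj a c) (hbc : G.Adj b c) (hK4 : ∀ v, G.Adj a v → G.Adj b v → ¬G.Adj c v)
    (hax : G.Adj a x) (hbx : G.Adj b x) (hay : G.Adj a y) (hby : G.Adj b y) :
    ¬G.Adj x y := by
  intro hxy
  by_cases hcx : c = x
  · subst hcx; exact hK4 y hay hby hxy
  by_cases hcy : c = y
  · subst hcy; exact hK4 x hax hbx hxy.symm
  exact hC5.false_of_five_cycle hac.symm hax hxy hby.symm hbc hcx hcy hay.ne hab.ne hbx.ne'

variable [DecidableEq V]

theorem Finset.exists_eq_triple_of_card_eq_three {s : Finset V} {a b : V} (hs : #s = 3)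
    (ha : a ∈ s) (hb : b ∈ s) (hab : a ≠ b) : ∃ c, c ≠ a ∧ c ≠ b ∧ s = {a, b, c} := by
  obtain ⟨c, hc, hcb⟩ :=
    exists_mem_ne (s := s.erase a) (by rw [card_erase_of_mem ha, hs]; decide) b
  obtain ⟨hca, hcs⟩ := mem_erase.1 hc
  refine ⟨c, hca, hcb, (eq_of_subset_of_card_le (by simp [insert_subset_iff, *]) ?_).symm⟩
  rw [hs, card_eq_three.2 ⟨a, b, c, hab, hca.symm, hcb.symm, rfl⟩]

theorem SameBlock.of_isNClique_of_mem {A B : Finset V} {p q : V} (hA : G.IsNClique 3 A)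
    (hB : G.IsNClique 3 B) (hpq : p ≠ q) (hpA : p ∈ A) (hqA : q ∈ A) (hpB : p ∈ B)
    (hqB : q ∈ B) : SameBlock G A B :=
  .single ⟨hA, hB, one_lt_card_iff.2 ⟨p, q, mem_inter.2 ⟨hpA, hpB⟩, mem_inter.2 ⟨hqA, hqB⟩, hpq⟩⟩

theorem SameBlock.of_closed {P : Finset V → Prop} {T T' : Finset V} (h : SameBlock G T T')
    (hP : ∀ A B, G.IsNClique 3 A → G.IsNClique 3 B → 2 ≤ #(A ∩ B) → P A → P B) (hT : P T) :
    P T' := by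
  induction h with
  | refl => exact hT
  | tail _ hAB ih => exact hP _ _ hAB.1 hAB.2.1 hAB.2.2 ih

theorem SameBlock.mem_and_mem {T T' : Finset V} {a b : V} (hab : a ≠ b)
    (ha : ∀ x w, G.Adj a x → G.Adj b x → G.Adj a w → G.Adj x w → w = b)
    (hb : ∀ x w, G.Adj a x → G.Adj b x → G.Adj b w → G.Adj x w → w = a)
    (h : SameBlock G T T') (haT : a ∈ T) (hbT : b ∈ T) : a ∈ T' ∧ b ∈ T' := by
  refine h.of_closed (P := fun A => a ∈ A ∧ b ∈ A) ?_ ⟨haT, hbT⟩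
  rintro A B hA hB hAB ⟨haA, hbA⟩
  obtain ⟨x, hxa, hxb, rfl⟩ := exists_eq_triple_of_card_eq_three hA.2 haA hbA hab
  have hax : G.Adj a x := hA.1 (by simp) (by simp) hxa.symm
  have hbx : G.Adj b x := hA.1 (by simp) (by simp) hxb.symm
  have third : ∀ u ∈ B, x ∈ B → u ≠ x → ∃ w ∈ B, G.Adj u w ∧ G.Adj x w := by
    intro u hu hx hux
    obtain ⟨w, hwu, hwx, hB'⟩ := exists_eq_triple_of_card_eq_three hB.2 hu hx hux
    exact ⟨w, by simp [hB'], hB.1 hu (by simp [hB']) hwu.symm, hB.1 hx (by simp [hB']) hwx.symm⟩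
  have hb_of_ha : a ∈ B → x ∈ B → b ∈ B := fun haB hxB => by
    obtain ⟨w, hwB, haw, hxw⟩ := third a haB hxB hxa.symm
    rwa [← ha x w hax hbx haw hxw]
  have ha_of_hb : b ∈ B → x ∈ B → a ∈ B := fun hbB hxB => by
    obtain ⟨w, hwB, hbw, hxw⟩ := third b hbB hxB hxb.symm
    rwa [← hb x w hax hbx hbw hxw]
  obtain ⟨p, q, hp, hq, hpq⟩ := one_lt_card_iff.1 hAB
  simp only [mem_inter, mem_insert, mem_singleton] at hp hq
  rcases hp with ⟨rfl | rfl | rfl, hpB⟩ <;> rcases hq with ⟨rfl | rfl | rfl, hqB⟩ <;> tauto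

theorem C5Free.subset_of_isNClique_four (hC5 : C5Free G) {K B : Finset V}
    (hK : G.IsNClique 4 K) (hB : G.IsClique (B : Set V)) {p q : V} (hpq : p ≠ q) (hpB : p ∈ B)
    (hqB : q ∈ B) (hpK : p ∈ K) (hqK : q ∈ K) : B ⊆ K := by
  intro w hwB
  by_contra hwK
  have hwp : w ≠ p := by rintro rfl; exact hwK hpK
  have hwq : w ≠ q := by rintro rfl; exact hwK hqK
  obtain ⟨r, s, hrs, hrest⟩ := card_eq_two.1 <| show #((K.erase p).erase q) = 2 by
    rw [card_erase_of_mem (mem_erase.2 ⟨hpq.symm, hqK⟩), card_erase_of_mem hpK, hK.2]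
  have hr : r ∈ (K.erase p).erase q := by simp [hrest]
  have hs : s ∈ (K.erase p).erase q := by simp [hrest]
  simp only [mem_erase] at hr hs
  exact hC5.false_of_five_cycle (hB hwB hpB hwp) (hK.1 hpK hr.2.2 hr.2.1.symm)
    (hK.1 hr.2.2 hs.2.2 hrs) (hK.1 hs.2.2 hqK hs.1) (hB hqB hwB hwq.symm)
    (by rintro rfl; exact hwK hr.2.2) (by rintro rfl; exact hwK hs.2.2) hs.2.1.symm hpq hr.1

theorem C5Free.isNClique_three_and_sameBlock_iff (hC5 : C5Free G) {a b c d : V}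
    (hab : G.Adj a b) (hac : G.Adj a c) (had : G.Adj a d) (hbc : G.Adj b c) (hbd : G.Adj b d)
    (hcd : G.Adj c d) (T' : Finset V) :
    G.IsNClique 3 T' ∧ SameBlock G {a, b, c} T' ↔
      T' = {a, b, c} ∨ T' = {a, b, d} ∨ T' = {a, c, d} ∨ T' = {b, c, d} := by
  have hK : G.IsNClique 4 {a, b, c, d} :=
    (is3Clique_triple_iff.2 ⟨hbc, hbd, hcd⟩).insert (by simp [hab, hac, had])
  constructor
  · rintro ⟨hT', h⟩
    have hsub : T' ⊆ {a, b, c, d} := by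
      refine h.of_closed (P := (· ⊆ {a, b, c, d})) ?_ (by simp [insert_subset_iff])
      intro A B _ hB hAB hA
      obtain ⟨p, q, hp, hq, hpq⟩ := one_lt_card_iff.1 hAB
      rw [mem_inter] at hp hq
      exact hC5.subset_of_isNClique_four hK hB.1 hpq hp.2 hq.2 (hA hp.1) (hA hq.1)
    obtain ⟨t, ht, hT't⟩ := ssubset_iff_exists_subset_erase.1 <|
      ssubset_of_subset_of_ne hsub (by rintro rfl; simpa [hT'.2] using hK.2)
    have hT'eq : T' = erase {a, b, c, d} t :=
      eq_of_subset_of_card_le hT't (by rw [card_erase_of_mem ht, hK.2, hT'.2])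
    simp only [mem_insert, mem_singleton] at ht
    rcases ht with rfl | rfl | rfl | rfl
    · refine .inr <| .inr <| .inr ?_
      rw [hT'eq, erase_insert (by simp [hab.ne, hac.ne, had.ne])]
    · refine .inr <| .inr <| .inl ?_
      rw [hT'eq, erase_insert_of_ne hab.ne, erase_insert (by simp [hbc.ne, hbd.ne])]
    · refine .inr <| .inl ?_
      rw [hT'eq, erase_insert_of_ne hac.ne, erase_insert_of_ne hbc.ne,
        erase_insert (by simp [hcd.ne])]
    · refine .inl ?_
      rw [hT'eq, erase_insert_of_ne had.ne, erase_insert_of_ne hbd.ne, erase_insert_of_ne hcd.ne,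
        erase_singleton, insert_empty]
  · have habc : G.IsNClique 3 {a, b, c} := is3Clique_triple_iff.2 ⟨hab, hac, hbc⟩
    rintro (rfl | rfl | rfl | rfl)
    · exact ⟨habc, .refl⟩
    · have habd : G.IsNClique 3 {a, b, d} := is3Clique_triple_iff.2 ⟨hab, had, hbd⟩
      exact ⟨habd, .of_isNClique_of_mem habc habd hab.ne (by simp) (by simp) (by simp) (by simp)⟩
    · have hacd : G.IsNClique 3 {a, c, d} := is3Clique_triple_iff.2 ⟨hac, had, hcd⟩
      exact ⟨hacd, .of_isNClique_of_mem habc hacd hac.ne (by simp) (by simp) (by simp) (by simp)⟩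
    · have hbcd : G.IsNClique 3 {b, c, d} := is3Clique_triple_iff.2 ⟨hbc, hbd, hcd⟩
      exact ⟨hbcd, .of_isNClique_of_mem habc hbcd hbc.ne (by simp) (by simp) (by simp) (by simp)⟩

theorem C5Free.mem_and_mem_of_sameBlock (hC5 : C5Free G) {a b c d : V} {T T' : Finset V}
    (hab : G.Adj a b) (hac : G.Adj a c) (hbc : G.Adj b c) (had : G.Adj a d) (hbd : G.Adj b d)
    (hcd : c ≠ d) (hK4 : ∀ v, G.Adj a v → G.Adj b v → ¬G.Adj c v) (h : SameBlock G T T')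
    (haT : a ∈ T) (hbT : b ∈ T) : a ∈ T' ∧ b ∈ T' := by
  have hother : ∀ x, ∃ y, G.Adj a y ∧ G.Adj b y ∧ x ≠ y := fun x =>
    if hxc : x = c then ⟨d, had, hbd, hxc ▸ hcd⟩ else ⟨c, hac, hbc, hxc⟩
  refine SameBlock.mem_and_mem hab.ne (fun x w hax hbx haw hxw => ?_)
    (fun x w hax hbx hbw hxw => ?_) h haT hbT
  all_goals
    obtain ⟨y, hay, hby, hxy⟩ := hother x
    have hnxy := hC5.not_adj_of_common_neighbors hab hac hbc hK4 hax hbx hay hby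
  · exact hC5.eq_of_adj_of_adj hab hax hbx hay hby hxy hnxy haw hxw
  · exact hC5.eq_of_adj_of_adj hab.symm hbx hax hby hay hxy hnxy hbw hxw

end

theorem block_is_crown_or_K4_general {V : Type*} [DecidableEq V] (G : SimpleGraph V)
    (hC5 : C5Free G)
    (T : Finset V) (hT : G.IsNClique 3 T) :
    (∃ a b : V, G.Adj a b ∧
        ∀ T' : Finset V, G.IsNClique 3 T' → SameBlock G T T' → a ∈ T' ∧ b ∈ T') ∨
    (∃ a b c d : V, G.Adj a b ∧ G.Adj a c ∧ G.Adj a d ∧ G.Adj b c ∧ G.Adj b d ∧ G.Adj c d ∧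
        ∀ T' : Finset V, (G.IsNClique 3 T' ∧ SameBlock G T T') ↔
          (T' = {a, b, c} ∨ T' = {a, b, d} ∨ T' = {a, c, d} ∨ T' = {b, c, d})) := by
  obtain ⟨a, b, c, hab, hac, hbc, rfl⟩ := is3Clique_iff.1 hT
  by_cases hK4 : ∃ d, G.Adj a d ∧ G.Adj b d ∧ G.Adj c d
  · obtain ⟨d, had, hbd, hcd⟩ := hK4
    exact .inr ⟨a, b, c, d, hab, hac, had, hbc, hbd, hcd,
      hC5.isNClique_three_and_sameBlock_iff hab hac had hbc hbd hcd⟩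
  push Not at hK4
  refine .inl ?_
  by_cases hab' : ∃ d ≠ c, G.Adj a d ∧ G.Adj b d
  · obtain ⟨d, hdc, had, hbd⟩ := hab'
    exact ⟨a, b, hab, fun _ _ h =>
      hC5.mem_and_mem_of_sameBlock hab hac hbc had hbd hdc.symm hK4 h (by simp) (by simp)⟩
  by_cases hac' : ∃ d ≠ b, G.Adj a d ∧ G.Adj c d
  · obtain ⟨d, hdb, had, hcd⟩ := hac'
    exact ⟨a, c, hac, fun _ _ h => hC5.mem_and_mem_of_sameBlock hac hab hbc.symm had hcd
      hdb.symm (fun v ha hc hb => hK4 v ha hb hc) h (by simp) (by simp)⟩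
  by_cases hbc' : ∃ d ≠ a, G.Adj b d ∧ G.Adj c d
  · obtain ⟨d, hda, hbd, hcd⟩ := hbc'
    exact ⟨b, c, hbc, fun _ _ h => hC5.mem_and_mem_of_sameBlock hbc hab.symm hac.symm hbd hcd
      hda.symm (fun v hb hc ha => hK4 v ha hb hc) h (by simp) (by simp)⟩
  refine ⟨a, b, hab, fun _ _ h => SameBlock.mem_and_mem hab.ne (fun x w hax hbx haw hxw => ?_)
    (fun x w hax hbx hbw hxw => ?_) h (by simp) (by simp)⟩
  all_goals obtain rfl : x = c := by_contra fun hxc => hab' ⟨x, hxc, hax, hbx⟩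
  · exact by_contra fun hwb => hac' ⟨w, hwb, haw, hxw⟩
  · exact by_contra fun hwa => hbc' ⟨w, hwa, hbw, hxw⟩

theorem block_is_crown_or_K4 {V : Type*} [DecidableEq V] (G : SimpleGraph V)
    (hC5 : C5Free G)
    (hEdge : ∀ u v : V, G.Adj u v → ∃ w : V, G.Adj u w ∧ G.Adj v w)
    (T : Finset V) (hT : G.IsNClique 3 T) :
    (∃ a b : V, G.Adj a b ∧
        ∀ T' : Finset V, G.IsNClique 3 T' → SameBlock G T T' → a ∈ T' ∧ b ∈ T') ∨
    (∃ a b c d : V, G.Adj a b ∧ G.Adj a c ∧ G.Adj a d ∧ G.Adj b c ∧ G.Adj b d ∧ G.Adj c d ∧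
        ∀ T' : Finset V, (G.IsNClique 3 T' ∧ SameBlock G T T') ↔
          (T' = {a, b, c} ∨ T' = {a, b, d} ∨ T' = {a, c, d} ∨ T' = {b, c, d})) :=
  block_is_crown_or_K4_general G hC5 T hT
end

section
/- Let G be a simple graph that contains no cycle of length 5 as a subgraph. Suppose a, b, c_1, c_2 are distinct vertices such that both abc_1 and abc_2 are triangles of G. If x is a vertex such that bc_1x (or ac_1x) is a triangle of G different from abc_1, then x = c_2. -/
open SimpleGraph

/-- The adjacent pairs of a closed 5-walk are distinct automatically, so only the five
non-consecutive pairs need to be assumed distinct. -/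
theorem C5Free.false_of_adj_cycle5 {V : Type*} {G : SimpleGraph V} (hG : C5Free G)
    {v₁ v₂ v₃ v₄ v₅ : V} (h₁₂ : G.Adj v₁ v₂) (h₂₃ : G.Adj v₂ v₃) (h₃₄ : G.Adj v₃ v₄)
    (h₄₅ : G.Adj v₄ v₅) (h₅₁ : G.Adj v₅ v₁)
    (d₁₃ : v₁ ≠ v₃) (d₁₄ : v₁ ≠ v₄) (d₂₄ : v₂ ≠ v₄) (d₂₅ : v₂ ≠ v₅) (d₃₅ : v₃ ≠ v₅) :
    False := by
  let w : G.Walk v₁ v₁ := .cons h₁₂ (.cons h₂₃ (.cons h₃₄ (.cons h₄₅ (.cons h₅₁ .nil))))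
  have hw : w.IsCycle := by
    simp only [w, Walk.cons_isCycle_iff, Walk.cons_isPath_iff, Walk.isPath_iff_nil, Walk.nil_nil,
      Walk.support_cons, Walk.support_nil, Walk.edges_cons, Walk.edges_nil,
      List.mem_cons, List.not_mem_nil, Sym2.eq_iff]
    grind [Adj.ne]
  exact hG v₁ w hw rfl

theorem third_triangle_vertex_eq_general {V : Type*} [DecidableEq V] (G : SimpleGraph V)
    (hC5 : C5Free G) (a b c₁ c₂ x : V)
    (hc₁c₂ : c₁ ≠ c₂)
    (h₁ : G.IsNClique 3 {a, b, c₁}) (h₂ : G.IsNClique 3 {a, b, c₂})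
    (hx : (G.IsNClique 3 {b, c₁, x} ∧ ({b, c₁, x} : Finset V) ≠ {a, b, c₁}) ∨
          (G.IsNClique 3 {a, c₁, x} ∧ ({a, c₁, x} : Finset V) ≠ {a, b, c₁})) :
    x = c₂ := by
  simp only [is3Clique_triple_iff] at h₁ h₂ hx
  obtain ⟨hab, hac₁, hbc₁⟩ := h₁
  obtain ⟨-, hac₂, hbc₂⟩ := h₂
  -- Otherwise `x c₁ a c₂ b` (resp. `x c₁ b c₂ a`) is a 5-cycle.
  by_contra hxc₂
  rcases hx with ⟨⟨-, hbx, hc₁x⟩, hne⟩ | ⟨⟨-, hax, hc₁x⟩, hne⟩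
  · have hxa : x ≠ a := by
      rintro rfl
      exact hne (by rw [Finset.insert_comm, Finset.pair_comm, Finset.insert_comm, Finset.pair_comm])
    exact hC5.false_of_adj_cycle5 hc₁x.symm hac₁.symm hac₂ hbc₂.symm hbx
      hxa hxc₂ hc₁c₂ hbc₁.ne.symm hab.ne
  · have hxb : x ≠ b := by
      rintro rfl
      exact hne (by rw [Finset.pair_comm])
    exact hC5.false_of_adj_cycle5 hc₁x.symm hbc₁.symm hbc₂ hac₂.symm hax
      hxb hxc₂ hc₁c₂ hac₁.ne.symm hab.ne.symm

theorem third_triangle_vertex_eq {V : Type*} [DecidableEq V] (G : SimpleGraph V)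
    (hC5 : C5Free G) (a b c₁ c₂ x : V)
    (hab : a ≠ b) (hac₁ : a ≠ c₁) (hac₂ : a ≠ c₂)
    (hbc₁ : b ≠ c₁) (hbc₂ : b ≠ c₂) (hc₁c₂ : c₁ ≠ c₂)
    (h₁ : G.IsNClique 3 {a, b, c₁}) (h₂ : G.IsNClique 3 {a, b, c₂})
    (hx : (G.IsNClique 3 {b, c₁, x} ∧ ({b, c₁, x} : Finset V) ≠ {a, b, c₁}) ∨
          (G.IsNClique 3 {a, c₁, x} ∧ ({a, c₁, x} : Finset V) ≠ {a, b, c₁})) :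
    x = c₂ :=
  third_triangle_vertex_eq_general G hC5 a b c₁ c₂ x hc₁c₂ h₁ h₂ hx
end

section
/- Let G be a simple graph that contains no cycle of length 5 as a subgraph, and suppose the four vertices a, b, c, d induce a complete graph K4 in G (all six pairs are adjacent). Then every triangle of G that shares an edge with some triangle contained in {a, b, c, d} has all three of its vertices in {a, b, c, d}. -/
/-!
Any two vertices `x`, `y` of a clique on at least four vertices are the ends of a path `x p q y`
inside the clique. A vertex `v` outside the clique adjacent to both `x` and `y` would close this
path to the 5-cycle `v x p q y`. So a triangle with an edge `xy` in the `K4` has its third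
vertex in the `K4`.
-/

open Finset SimpleGraph

namespace C5Free

variable {V : Type*} {G : SimpleGraph V}

theorem not_adj_of_path (hC5 : C5Free G) {v x p q y : V}
    (hxp : G.Adj x p) (hpq : G.Adj p q) (hqy : G.Adj q y)
    (hxq : x ≠ q) (hxy : x ≠ y) (hpy : p ≠ y) (hvp : v ≠ p) (hvq : v ≠ q)
    (hvx : G.Adj v x) : ¬ G.Adj v y := fun hvy =>
  hC5 v (.cons hvx (.cons hxp (.cons hpq (.cons hqy (.cons hvy.symm .nil))))) (by
    simp [Walk.cons_isCycle_iff, hxp.ne, hpq.ne, hqy.ne, hvx.ne, hvy.ne, hxq, hxy, hpy, hvp, hvq,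
      hvx.ne.symm, hvy.ne.symm, hvp.symm, hvq.symm]) rfl

theorem not_adj_of_isClique [DecidableEq V] (hC5 : C5Free G) {S : Finset V}
    (hS : G.IsClique (S : Set V)) (hcard : 4 ≤ #S) {v x y : V} (hx : x ∈ S) (hy : y ∈ S)
    (hxy : x ≠ y) (hv : v ∉ S) (hvx : G.Adj v x) : ¬ G.Adj v y := by
  have htwo : 1 < #((S.erase x).erase y) := by
    rw [card_erase_of_mem (mem_erase.2 ⟨hxy.symm, hy⟩), card_erase_of_mem hx]
    omega
  obtain ⟨p, hp, q, hq, hpq⟩ := one_lt_card.1 htwo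
  simp only [mem_erase] at hp hq
  exact hC5.not_adj_of_path (hS hx hp.2.2 hp.2.1.symm) (hS hp.2.2 hq.2.2 hpq)
    (hS hq.2.2 hy hq.1) (Ne.symm hq.2.1) hxy hp.1 (ne_of_mem_of_not_mem hp.2.2 hv).symm
    (ne_of_mem_of_not_mem hq.2.2 hv).symm hvx

end C5Free

theorem triangle_sharing_edge_with_K4_is_inside_general {V : Type*} [DecidableEq V]
    (G : SimpleGraph V) (hC5 : C5Free G) (a b c d : V)
    (hab : G.Adj a b) (hac : G.Adj a c) (had : G.Adj a d)
    (hbc : G.Adj b c) (hbd : G.Adj b d) (hcd : G.Adj c d)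
    (T T' : Finset V) (hT : G.IsNClique 3 T)
    (hT'sub : T' ⊆ ({a, b, c, d} : Finset V)) (hshare : 2 ≤ (T ∩ T').card) :
    T ⊆ ({a, b, c, d} : Finset V) := by
  have hK4 : G.IsClique (({a, b, c, d} : Finset V) : Set V) := by
    simp [isClique_insert, hab, hac, had, hbc, hbd, hcd]
  have hcard : 4 ≤ #({a, b, c, d} : Finset V) := by
    simp [hab.ne, hac.ne, had.ne, hbc.ne, hbd.ne, hcd.ne]
  intro v hvT
  by_contra hvS
  obtain ⟨x, hx, y, hy, hxy⟩ := one_lt_card.1 hshare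
  rw [mem_inter] at hx hy
  exact hC5.not_adj_of_isClique hK4 hcard (hT'sub hx.2) (hT'sub hy.2) hxy hvS
    (hT.isClique hvT hx.1 (ne_of_mem_of_not_mem (hT'sub hx.2) hvS).symm)
    (hT.isClique hvT hy.1 (ne_of_mem_of_not_mem (hT'sub hy.2) hvS).symm)

theorem triangle_sharing_edge_with_K4_is_inside {V : Type*} [DecidableEq V]
    (G : SimpleGraph V) (hC5 : C5Free G) (a b c d : V)
    (hab : G.Adj a b) (hac : G.Adj a c) (had : G.Adj a d)
    (hbc : G.Adj b c) (hbd : G.Adj b d) (hcd : G.Adj c d)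
    (T T' : Finset V) (hT : G.IsNClique 3 T) (hT' : G.IsNClique 3 T')
    (hT'sub : T' ⊆ ({a, b, c, d} : Finset V)) (hshare : 2 ≤ (T ∩ T').card) :
    T ⊆ ({a, b, c, d} : Finset V) :=
  triangle_sharing_edge_with_K4_is_inside_general G hC5 a b c d hab hac had hbc hbd hcd T T' hT
    hT'sub hshare
end

section
/- Let G_0 be a bipartite simple graph with parts A and B that contains no cycle of length 4 as a subgraph. Let G be the graph on vertex set A ∪ (B × {0,1}) whose edges are: {(b,0),(b,1)} for every b ∈ B, and {a,(b,i)} for every edge {a,b} of G_0 and each i ∈ {0,1}. Then G contains no cycle of length 5 as a subgraph, and the number of triangles of G equals the number of edges of G_0. -/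
/-- The doubling construction of Bollobás and Győri: each vertex `b` of the part `β`
is doubled into `(b, false)` and `(b, true)`, which are joined by an edge, and each
edge `{a, b}` of `G₀` gives rise to the edges `{a, (b, false)}` and `{a, (b, true)}`. -/
def doubledGraph {α β : Type*} (G₀ : SimpleGraph (α ⊕ β)) :
    SimpleGraph (α ⊕ β × Bool) :=
  SimpleGraph.fromRel (fun u v =>
    (∃ (b : β) (i j : Bool), i ≠ j ∧ u = Sum.inr (b, i) ∧ v = Sum.inr (b, j)) ∨
    (∃ (a : α) (b : β) (i : Bool), u = Sum.inl a ∧ v = Sum.inr (b, i) ∧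
      G₀.Adj (Sum.inl a) (Sum.inr b)))

/-!
The vertices of `α` are independent in the doubled graph and the twin edges `(b, 0)(b, 1)` form
a matching, so up to rotation a pentagon would have to be `a, (b, i), a', (c, 0), (c, 1)`. Since
`(b, i)` is neither copy of `c`, `b ≠ c` and `a, b, a', c` is a 4-cycle of `G₀`. For the same
two reasons a triangle is `{a, (b, 0), (b, 1)}` for an edge `ab` of `G₀`, and distinct edges give
distinct triangles.
-/

open SimpleGraph Sum

section Cycles

variable {V : Type*} {G : SimpleGraph V}

theorem C4Free.eq_or_eq (hG : C4Free G) {a b c d : V} (hab : G.Adj a b) (hbc : G.Adj b c)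
    (hcd : G.Adj c d) (hda : G.Adj d a) : a = c ∨ b = d := by
  by_contra! hne
  obtain ⟨hac, hbd⟩ := hne
  have hpath : (Walk.cons hbc (.cons hcd (.cons hda .nil))).IsPath :=
    Walk.IsPath.mk' (by simp [hbc.ne, hbd, hab.ne.symm, hcd.ne, hac.symm, hda.ne])
  refine hG a (.cons hab _) (Walk.cons_isCycle_iff _ _ |>.mpr ⟨hpath, ?_⟩) rfl
  simp [hab.ne, hab.ne.symm, hbc.ne, hac, hbd]

structure IsPentagon (G : SimpleGraph V) (v₀ v₁ v₂ v₃ v₄ : V) : Prop where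
  adj₀₁ : G.Adj v₀ v₁
  adj₁₂ : G.Adj v₁ v₂
  adj₂₃ : G.Adj v₂ v₃
  adj₃₄ : G.Adj v₃ v₄
  adj₄₀ : G.Adj v₄ v₀
  nodup : [v₀, v₁, v₂, v₃, v₄].Nodup

theorem IsPentagon.rotate {v₀ v₁ v₂ v₃ v₄ : V} (p : IsPentagon G v₀ v₁ v₂ v₃ v₄) :
    IsPentagon G v₁ v₂ v₃ v₄ v₀ :=
  ⟨p.adj₁₂, p.adj₂₃, p.adj₃₄, p.adj₄₀, p.adj₀₁, (List.rotate_perm _ 1).nodup_iff.mpr p.nodup⟩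

theorem c5Free_of_forall_not_isPentagon
    (h : ∀ v₀ v₁ v₂ v₃ v₄ : V, ¬ IsPentagon G v₀ v₁ v₂ v₃ v₄) : C5Free G := by
  intro v w hw hlen
  obtain _ | ⟨h₁, _ | ⟨h₂, _ | ⟨h₃, _ | ⟨h₄, _ | ⟨h₅, _ | ⟨_, w⟩⟩⟩⟩⟩⟩ := w <;>
    simp only [Walk.length_cons, Walk.length_nil] at hlen <;> try omega
  exact h _ _ _ _ _ ⟨h₂, h₃, h₄, h₅, h₁, by simpa using hw.support_nodup⟩

end Cycles

theorem ncard_edgeSet_of_forall_not_adj {α β : Type*} {G : SimpleGraph (α ⊕ β)}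
    (hA : ∀ a a' : α, ¬ G.Adj (inl a) (inl a')) (hB : ∀ b b' : β, ¬ G.Adj (inr b) (inr b')) :
    G.edgeSet.ncard = {p : α × β | G.Adj (inl p.1) (inr p.2)}.ncard := by
  have himage : G.edgeSet = (fun p : α × β ↦ s(inl p.1, inr p.2)) ''
      {p : α × β | G.Adj (inl p.1) (inr p.2)} := by
    ext e
    induction e with
    | _ u v =>
      rcases u with a | b <;> rcases v with a' | b'
      · simpa using hA a a'
      · simp
      · simp [G.adj_comm (inr b)]
      · simpa using hB b b'
  rw [himage, Set.ncard_image_of_injective]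
  rintro ⟨a, b⟩ ⟨a', b'⟩ h
  simp_all

namespace doubledGraph

variable {α β : Type*} {G₀ : SimpleGraph (α ⊕ β)}

@[simp]
theorem not_adj_inl_inl (a a' : α) : ¬ (doubledGraph G₀).Adj (inl a) (inl a') := by
  simp [doubledGraph]

@[simp]
theorem adj_inl_inr {a : α} {b : β} {i : Bool} :
    (doubledGraph G₀).Adj (inl a) (inr (b, i)) ↔ G₀.Adj (inl a) (inr b) := by
  simp [doubledGraph, ← and_or_left]

@[simp]
theorem adj_inr_inl {a : α} {b : β} {i : Bool} :
    (doubledGraph G₀).Adj (inr (b, i)) (inl a) ↔ G₀.Adj (inl a) (inr b) := by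
  rw [adj_comm, adj_inl_inr]

@[simp]
theorem adj_inr_inr {b b' : β} {i j : Bool} :
    (doubledGraph G₀).Adj (inr (b, i)) (inr (b', j)) ↔ b = b' ∧ i ≠ j := by
  simp [doubledGraph]
  cases i <;> cases j <;> simp [eq_comm]

theorem eq_of_adj_inr_of_adj_inr {x y z : β × Bool}
    (hxy : (doubledGraph G₀).Adj (inr x) (inr y))
    (hyz : (doubledGraph G₀).Adj (inr y) (inr z)) : x = z := by
  obtain ⟨b, i⟩ := x; obtain ⟨_, j⟩ := y; obtain ⟨_, k⟩ := z
  simp only [adj_inr_inr] at hxy hyz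
  obtain ⟨rfl, hij⟩ := hxy
  obtain ⟨rfl, hjk⟩ := hyz
  cases i <;> cases j <;> cases k <;> simp_all

theorem not_isPentagon_inr_inr_inr {x y z : β × Bool} {v₃ v₄ : α ⊕ β × Bool}
    (p : IsPentagon (doubledGraph G₀) (inr x) (inr y) (inr z) v₃ v₄) : False := by
  have hnodup := p.nodup
  simp [eq_of_adj_inr_of_adj_inr p.adj₀₁ p.adj₁₂] at hnodup

theorem not_isPentagon_inl_inr_inl_inr_inr (hC4 : C4Free G₀) {a a' : α} {x y z : β × Bool}
    (p : IsPentagon (doubledGraph G₀) (inl a) (inr x) (inl a') (inr y) (inr z)) : False := by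
  obtain ⟨h₀₁, h₁₂, h₂₃, h₃₄, h₄₀, hnodup⟩ := p
  obtain ⟨b, i⟩ := x; obtain ⟨c, j⟩ := y; obtain ⟨_, k⟩ := z
  simp only [adj_inl_inr, adj_inr_inl, adj_inr_inr] at h₀₁ h₁₂ h₂₃ h₃₄ h₄₀
  obtain ⟨rfl, hjk⟩ := h₃₄
  have hbc : b ≠ c := by
    rintro rfl
    cases i <;> cases j <;> cases k <;> simp_all
  rcases hC4.eq_or_eq h₀₁ h₁₂.symm h₂₃ h₄₀.symm with h | h <;> simp_all

theorem not_isPentagon_inl (hC4 : C4Free G₀) {a : α} {v₁ v₂ v₃ v₄ : α ⊕ β × Bool}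
    (p : IsPentagon (doubledGraph G₀) (inl a) v₁ v₂ v₃ v₄) : False := by
  rcases v₁ with _ | _
  · exact not_adj_inl_inl _ _ p.adj₀₁
  rcases v₄ with _ | _
  · exact not_adj_inl_inl _ _ p.adj₄₀
  rcases v₂ with _ | _ <;> rcases v₃ with _ | _
  · exact not_adj_inl_inl _ _ p.adj₂₃
  · exact not_isPentagon_inl_inr_inl_inr_inr hC4 p
  · exact not_isPentagon_inl_inr_inl_inr_inr hC4 p.rotate.rotate.rotate
  · exact not_isPentagon_inr_inr_inr p.rotate

theorem not_isPentagon (hC4 : C4Free G₀) (v₀ v₁ v₂ v₃ v₄ : α ⊕ β × Bool) :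
    ¬ IsPentagon (doubledGraph G₀) v₀ v₁ v₂ v₃ v₄ := by
  intro p
  rcases v₀ with _ | _
  · exact not_isPentagon_inl hC4 p
  rcases v₁ with _ | _
  · exact not_isPentagon_inl hC4 p.rotate
  rcases v₂ with _ | _
  · exact not_isPentagon_inl hC4 p.rotate.rotate
  rcases v₃ with _ | _
  · exact not_isPentagon_inl hC4 p.rotate.rotate.rotate
  rcases v₄ with _ | _
  · exact not_isPentagon_inl hC4 p.rotate.rotate.rotate.rotate
  exact not_isPentagon_inr_inr_inr p

theorem c5Free (hC4 : C4Free G₀) : C5Free (doubledGraph G₀) :=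
  c5Free_of_forall_not_isPentagon (not_isPentagon hC4)

section Triangles

variable [DecidableEq α] [DecidableEq β]

def triangle (p : α × β) : Finset (α ⊕ β × Bool) := {inl p.1, inr (p.2, false), inr (p.2, true)}

theorem triangle_injective : Function.Injective (triangle : α × β → _) := by
  rintro ⟨a, b⟩ ⟨a', b'⟩ h
  have ha := Finset.ext_iff.mp h (inl a)
  have hb := Finset.ext_iff.mp h (inr (b, false))
  simp only [triangle, Finset.mem_insert, Finset.mem_singleton] at ha hb
  simp_all

theorem isNClique_three_triangle {p : α × β} (hp : G₀.Adj (inl p.1) (inr p.2)) :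
    (doubledGraph G₀).IsNClique 3 (triangle p) := by
  simp [triangle, is3Clique_triple_iff, hp]

theorem exists_triangle_eq_of_adj_inl {a : α} {y z : α ⊕ β × Bool}
    (hy : (doubledGraph G₀).Adj (inl a) y) (hz : (doubledGraph G₀).Adj (inl a) z)
    (hyz : (doubledGraph G₀).Adj y z) :
    ∃ b, G₀.Adj (inl a) (inr b) ∧ triangle (a, b) = {inl a, y, z} := by
  rcases y with _ | ⟨b, i⟩
  · exact absurd hy (not_adj_inl_inl _ _)
  rcases z with _ | ⟨c, j⟩
  · exact absurd hz (not_adj_inl_inl _ _)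
  obtain ⟨rfl, hij⟩ := adj_inr_inr.mp hyz
  refine ⟨b, adj_inl_inr.mp hy, ?_⟩
  cases i <;> cases j <;> simp_all [triangle, Finset.pair_comm]

theorem exists_triangle_eq_of_isNClique_three {t : Finset (α ⊕ β × Bool)}
    (ht : (doubledGraph G₀).IsNClique 3 t) :
    ∃ p : α × β, G₀.Adj (inl p.1) (inr p.2) ∧ triangle p = t := by
  obtain ⟨x, y, z, hxy, hxz, hyz, rfl⟩ := is3Clique_iff.mp ht
  rcases x with a | x
  · obtain ⟨b, hab, h⟩ := exists_triangle_eq_of_adj_inl hxy hxz hyz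
    exact ⟨(a, b), hab, h⟩
  rcases y with a | y
  · obtain ⟨b, hab, h⟩ := exists_triangle_eq_of_adj_inl hxy.symm hyz hxz
    exact ⟨(a, b), hab, h.trans (Finset.insert_comm _ _ _)⟩
  rcases z with a | z
  · obtain ⟨b, hab, h⟩ := exists_triangle_eq_of_adj_inl hxz.symm hyz.symm hxy
    refine ⟨(a, b), hab, h.trans ?_⟩
    rw [Finset.insert_comm, Finset.pair_comm, Finset.insert_comm]
  exact (hxz.ne (congrArg inr (eq_of_adj_inr_of_adj_inr hxy hyz))).elim

theorem ncard_isNClique_three :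
    {t | (doubledGraph G₀).IsNClique 3 t}.ncard =
      {p : α × β | G₀.Adj (inl p.1) (inr p.2)}.ncard := by
  have himage : {t | (doubledGraph G₀).IsNClique 3 t} =
      triangle '' {p : α × β | G₀.Adj (inl p.1) (inr p.2)} :=
    Set.ext fun _ ↦ ⟨exists_triangle_eq_of_isNClique_three,
      fun ⟨_, hp, ht⟩ ↦ ht ▸ isNClique_three_triangle hp⟩
  rw [himage, Set.ncard_image_of_injective _ triangle_injective]

end Triangles

end doubledGraph

theorem doubling_construction_general {α β : Type*}
    (G₀ : SimpleGraph (α ⊕ β))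
    (hA : ∀ a a' : α, ¬ G₀.Adj (Sum.inl a) (Sum.inl a'))
    (hB : ∀ b b' : β, ¬ G₀.Adj (Sum.inr b) (Sum.inr b'))
    (hC4 : C4Free G₀) :
    C5Free (doubledGraph G₀) ∧
      {t : Finset (α ⊕ β × Bool) | (doubledGraph G₀).IsNClique 3 t}.ncard =
        G₀.edgeSet.ncard := by
  classical
  exact ⟨doubledGraph.c5Free hC4,
    doubledGraph.ncard_isNClique_three.trans (ncard_edgeSet_of_forall_not_adj hA hB).symm⟩

theorem doubling_construction {α β : Type*} [Fintype α] [Fintype β]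
    (G₀ : SimpleGraph (α ⊕ β))
    (hA : ∀ a a' : α, ¬ G₀.Adj (Sum.inl a) (Sum.inl a'))
    (hB : ∀ b b' : β, ¬ G₀.Adj (Sum.inr b) (Sum.inr b'))
    (hC4 : C4Free G₀) :
    C5Free (doubledGraph G₀) ∧
      {t : Finset (α ⊕ β × Bool) | (doubledGraph G₀).IsNClique 3 t}.ncard =
        G₀.edgeSet.ncard :=
  doubling_construction_general G₀ hA hB hC4
end

section
/- For every ε > 0 there exists N such that for all n ≥ N, every simple graph on n vertices that contains neither a cycle of length 4 nor a cycle of length 5 as a subgraph has at most (1/(2√2) + ε)·n^{3/2} edges. -/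
open Finset SimpleGraph

theorem three_mul_le_add_of_mul_mul_eq_pow_three {x y z a : ℝ} (hx : 0 ≤ x) (hy : 0 ≤ y)
    (hz : 0 ≤ z) (h : x * y * z = a ^ 3) : 3 * a ≤ x + y + z := by
  have amgm : 27 * (x * y * z) ≤ (x + y + z) ^ 3 := by
    nlinarith [mul_nonneg hx (sq_nonneg (y - z)), mul_nonneg hy (sq_nonneg (x - z)),
      mul_nonneg hz (sq_nonneg (x - y)), mul_nonneg (add_nonneg (add_nonneg hx hy) hz)
        (add_nonneg (add_nonneg (sq_nonneg (x - y)) (sq_nonneg (y - z))) (sq_nonneg (x - z)))]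
  rw [h] at amgm
  exact le_of_pow_le_pow_left₀ (n := 3) (by norm_num) (by positivity) (by linarith)

theorem Finset.sum_pow_three_le_card_mul_sum_sq_div_mul_sum_mul {ι : Type*} (s : Finset ι)
    {a b : ι → ℝ} (ha : ∀ i ∈ s, 0 ≤ a i) (hb : ∀ i ∈ s, 0 ≤ b i)
    (hab : ∀ i ∈ s, b i = 0 → a i = 0) :
    (∑ i ∈ s, a i) ^ 3 ≤ #s * (∑ i ∈ s, a i ^ 2 / b i) * ∑ i ∈ s, a i * b i := by
  have hsq_div : ∀ i ∈ s, 0 ≤ a i ^ 2 / b i := fun i hi => div_nonneg (sq_nonneg _) (hb i hi)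
  have hmul : ∀ i ∈ s, 0 ≤ a i * b i := fun i hi => mul_nonneg (ha i hi) (hb i hi)
  rcases (sum_nonneg ha).eq_or_lt with hT | hT
  · rw [← hT, zero_pow three_ne_zero]
    have := sum_nonneg hsq_div
    have := sum_nonneg hmul
    positivity
  have hpos : ∀ i ∈ s, 0 < a i → 0 < b i := fun i hi hai =>
    (hb i hi).lt_of_ne' fun h => hai.ne' (hab i hi h)
  obtain ⟨j, hj, haj⟩ : ∃ j ∈ s, 0 < a j := exists_lt_of_sum_lt (by simpa using hT)
  set T := ∑ i ∈ s, a i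
  set P := ∑ i ∈ s, a i ^ 2 / b i
  set Q := ∑ i ∈ s, a i * b i
  have hP : 0 < P := (div_pos (pow_pos haj 2) (hpos j hj haj)).trans_le (single_le_sum hsq_div hj)
  have hQ : 0 < Q := (mul_pos haj (hpos j hj haj)).trans_le (single_le_sum hmul hj)
  -- AM-GM `3 a ≤ λ a²/b + μ a b + 1/(λ μ)`, at the optimal `λ = T/P`, `μ = T/Q`
  have pointwise : ∀ i ∈ s, 3 * a i ≤ T / P * (a i ^ 2 / b i) + T / Q * (a i * b i) +
      P * Q / T ^ 2 := by
    intro i hi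
    rcases (ha i hi).eq_or_lt with hai | hai
    · rw [← hai, mul_zero]
      have := hb i hi
      positivity
    have hbi := hpos i hi hai
    refine three_mul_le_add_of_mul_mul_eq_pow_three (by positivity) (by positivity)
      (by positivity) ?_
    field_simp
  have summed := sum_le_sum pointwise
  rw [← mul_sum, sum_add_distrib, sum_add_distrib, ← mul_sum, ← mul_sum, sum_const,
    nsmul_eq_mul, div_mul_cancel₀ _ hP.ne', div_mul_cancel₀ _ hQ.ne'] at summed
  have : T * T ^ 2 ≤ #s * (P * Q / T ^ 2) * T ^ 2 := by gcongr; linarith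
  rw [mul_assoc, div_mul_cancel₀ _ (by positivity)] at this
  linarith

theorem le_of_eight_mul_pow_three_le {x r ε : ℝ} (hr : 1 ≤ r) (hεr : 4 ≤ ε * r)
    (h : 8 * x ^ 3 ≤ x * r ^ 6 + 4 * r ^ 8 + 8 * x * r ^ 4) :
    x ≤ (1 / (2 * Real.sqrt 2) + ε) * r ^ 3 := by
  set c := 1 / (2 * Real.sqrt 2)
  have hc : 0 < c := by positivity
  have hc8 : 8 * c ^ 2 = 1 := by
    simp only [c, div_pow, mul_pow, Real.sq_sqrt zero_le_two]; norm_num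
  have h4c : 1 ≤ 4 * c := by nlinarith
  by_contra! hx
  have hr0 : 0 < r := by linarith
  have hε : 0 < ε := pos_of_mul_pos_left (by linarith) hr0.le
  have hcx : c * r ^ 3 < x := lt_of_le_of_lt (by gcongr; linarith) hx
  have hx0 : 0 < x := lt_trans (by positivity) hcx
  -- `r³ < x / c = 8 c x` makes the term `4 r⁸` of order `x r⁵`, so that one may divide by `x`
  have h1 : r ^ 3 < 8 * c * x := by
    linear_combination mul_lt_mul_of_pos_left hcx (by positivity : (0 : ℝ) < 8 * c) - r ^ 3 * hc8
  have h2 : 8 * x ^ 2 < r ^ 6 + 32 * c * r ^ 5 + 8 * r ^ 4 := by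
    refine lt_of_mul_lt_mul_left ?_ hx0.le
    linear_combination h + 4 * mul_lt_mul_of_pos_left h1 (pow_pos hr0 5)
  have h3 : ((c + ε) * r ^ 3) ^ 2 < x ^ 2 := pow_lt_pow_left₀ hx (by positivity) two_ne_zero
  have h4 : 8 * r ^ 4 * (2 * c * ε * r ^ 2) < 8 * r ^ 4 * (4 * c * r + 1) := by
    linear_combination 8 * h3 + h2 + 8 * sq_nonneg (ε * r ^ 3) - r ^ 6 * hc8
  have h5 := lt_of_mul_lt_mul_left h4 (by positivity)
  nlinarith [mul_le_mul_of_nonneg_left hεr (by positivity : 0 ≤ 2 * c * r), mul_le_mul h4c hr]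

variable {V : Type*} {G : SimpleGraph V}

theorem C4Free.eq_of_adj (h : C4Free G) {u w x y : V} (huw : u ≠ w) (hux : G.Adj u x)
    (hxw : G.Adj x w) (huy : G.Adj u y) (hyw : G.Adj y w) : x = y := by
  by_contra hxy
  refine h u (.cons hux (.cons hxw (.cons hyw.symm (.cons huy.symm .nil)))) ?_ rfl
  grind [Walk.cons_isCycle_iff, Walk.cons_isPath_iff, Walk.IsPath.nil, Walk.support_nil,
    Walk.edges_cons, Walk.edges_nil, hux.ne, hxw.ne, hyw.ne, huy.ne]

theorem C5Free.false_of_adj (h : C5Free G) {a b c d e : V} (hab : G.Adj a b) (hbc : G.Adj b c)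
    (hcd : G.Adj c d) (hde : G.Adj d e) (hea : G.Adj e a)
    (hac : a ≠ c) (had : a ≠ d) (hbd : b ≠ d) (hbe : b ≠ e) (hce : c ≠ e) : False := by
  refine h a (.cons hab (.cons hbc (.cons hcd (.cons hde (.cons hea .nil))))) ?_ rfl
  grind [Walk.cons_isCycle_iff, Walk.cons_isPath_iff, Walk.IsPath.nil, Walk.support_nil,
    Walk.edges_cons, Walk.edges_nil, hab.ne, hbc.ne, hcd.ne, hde.ne, hea.ne]

variable [Fintype V] [DecidableRel G.Adj]

namespace SimpleGraph

def neighborDegreeSum (G : SimpleGraph V) [DecidableRel G.Adj] (v : V) : ℕ :=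
  ∑ x ∈ G.neighborFinset v, G.degree x

theorem sum_sum_neighborFinset {M : Type*} [AddCommMonoid M] (g : V → M) :
    ∑ u, ∑ v ∈ G.neighborFinset u, g v = ∑ v, G.degree v • g v := by
  rw [sum_comm' (t' := univ) (s' := fun v => G.neighborFinset v) fun u v => by simp [adj_comm]]
  simp only [sum_const, card_neighborFinset_eq_degree]

theorem sum_neighborDegreeSum : ∑ v, G.neighborDegreeSum v = ∑ v, G.degree v ^ 2 := by
  simp only [neighborDegreeSum, sum_sum_neighborFinset, smul_eq_mul, sq]

theorem degree_pos_of_mem_neighborFinset {u v : V} (h : v ∈ G.neighborFinset u) :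
    0 < G.degree v :=
  (G.degree_pos_iff_exists_adj v).2 ⟨u, ((G.mem_neighborFinset u v).1 h).symm⟩

theorem degree_le_neighborDegreeSum (v : V) : G.degree v ≤ G.neighborDegreeSum v := by
  rw [← card_neighborFinset_eq_degree, card_eq_sum_ones]
  exact sum_le_sum fun x hx => degree_pos_of_mem_neighborFinset hx

theorem sum_degree_sq_div_neighborDegreeSum_le :
    ∑ v, (G.degree v : ℝ) ^ 2 / G.neighborDegreeSum v ≤ Fintype.card V := by
  have titu (v : V) : (G.degree v : ℝ) ^ 2 / G.neighborDegreeSum v ≤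
      ∑ x ∈ G.neighborFinset v, 1 / (G.degree x : ℝ) := by
    have := sq_sum_div_le_sum_sq_div (G.neighborFinset v) (fun _ => (1 : ℝ))
      fun x hx => (Nat.cast_pos.2 (degree_pos_of_mem_neighborFinset hx) : (0 : ℝ) < G.degree x)
    simpa [neighborDegreeSum] using this
  calc ∑ v, (G.degree v : ℝ) ^ 2 / G.neighborDegreeSum v
      ≤ ∑ v, ∑ x ∈ G.neighborFinset v, 1 / (G.degree x : ℝ) := sum_le_sum fun v _ => titu v
    _ = ∑ x, G.degree x • (1 / (G.degree x : ℝ)) := sum_sum_neighborFinset _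
    _ ≤ ∑ _x : V, (1 : ℝ) := sum_le_sum fun x _ => by
        rw [nsmul_eq_mul, one_div]; exact mul_inv_le_one
    _ = Fintype.card V := by simp

theorem sum_degree_pow_three_le :
    (∑ v, (G.degree v : ℝ)) ^ 3 ≤
      Fintype.card V ^ 2 * ∑ v, (G.degree v : ℝ) * G.neighborDegreeSum v :=
  calc (∑ v, (G.degree v : ℝ)) ^ 3
      ≤ #univ * (∑ v, (G.degree v : ℝ) ^ 2 / G.neighborDegreeSum v) *
          ∑ v, (G.degree v : ℝ) * G.neighborDegreeSum v :=
        univ.sum_pow_three_le_card_mul_sum_sq_div_mul_sum_mul (fun _ _ => Nat.cast_nonneg _)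
          (fun _ _ => Nat.cast_nonneg _) fun v _ h => by
            have := G.degree_le_neighborDegreeSum v
            rw [Nat.cast_eq_zero] at h ⊢
            omega
    _ ≤ Fintype.card V ^ 2 * ∑ v, (G.degree v : ℝ) * G.neighborDegreeSum v := by
        rw [card_univ, sq]
        gcongr
        exact sum_degree_sq_div_neighborDegreeSum_le

variable [DecidableEq V]

theorem sum_degree_le_of_pairwiseDisjoint {S T : Finset V}
    (h : (S : Set V).PairwiseDisjoint fun x => G.neighborFinset x \ T) :
    ∑ x ∈ S, G.degree x ≤ Fintype.card V + #S * #T :=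
  calc ∑ x ∈ S, G.degree x ≤ ∑ x ∈ S, (#(G.neighborFinset x \ T) + #T) :=
        sum_le_sum fun x _ => by
          rw [← card_neighborFinset_eq_degree]; exact card_le_card_sdiff_add_card
    _ = #(S.biUnion fun x => G.neighborFinset x \ T) + #S * #T := by
        rw [card_biUnion h, sum_add_distrib, sum_const, smul_eq_mul]
    _ ≤ Fintype.card V + #S * #T := by gcongr; exact card_le_univ _

theorem neighborDegreeSum_eq_of_adj {u v : V} (huv : G.Adj u v) :
    G.neighborDegreeSum u =
      G.degree v + ∑ w ∈ G.neighborFinset u ∩ G.neighborFinset v, G.degree w +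
        ∑ x ∈ G.neighborFinset u \ insert v (G.neighborFinset v), G.degree x := by
  have hinter : G.neighborFinset u ∩ insert v (G.neighborFinset v) =
      insert v (G.neighborFinset u ∩ G.neighborFinset v) := by
    rw [inter_insert_of_mem ((G.mem_neighborFinset u v).2 huv)]
  rw [neighborDegreeSum, ← sum_inter_add_sum_sdiff _ (insert v (G.neighborFinset v)), hinter,
    sum_insert (by simp)]

end SimpleGraph

variable [DecidableEq V]

theorem C4Free.neighborDegreeSum_le (h : C4Free G) (v : V) :
    G.neighborDegreeSum v ≤ Fintype.card V + G.degree v := by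
  have := G.sum_degree_le_of_pairwiseDisjoint (S := G.neighborFinset v) (T := {v})
    fun x hx y hy hxy => disjoint_left.2 fun z hzx hzy => by
      simp only [mem_sdiff, mem_neighborFinset, mem_singleton, mem_coe] at hx hy hzx hzy
      exact hxy (h.eq_of_adj (Ne.symm hzx.2) hx hzx.1 hy hzy.1)
  simpa [neighborDegreeSum] using this

theorem C4Free.sum_degree_sq_le (h : C4Free G) :
    ∑ v, G.degree v ^ 2 ≤ Fintype.card V ^ 2 + ∑ v, G.degree v := by
  rw [← sum_neighborDegreeSum, sq, ← smul_eq_mul, ← card_univ, ← sum_const, ← sum_add_distrib]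
  exact sum_le_sum fun v _ => h.neighborDegreeSum_le v

theorem C4Free.card_inter_neighborFinset_le_one (h : C4Free G) {u w : V} (huw : u ≠ w) :
    #(G.neighborFinset u ∩ G.neighborFinset w) ≤ 1 :=
  card_le_one.2 fun x hx y hy => by
    simp only [mem_inter, mem_neighborFinset] at hx hy
    exact h.eq_of_adj huw hx.1 hx.2.symm hy.1 hy.2.symm

theorem C4Free.sum_sum_inter_neighborFinset_le (h : C4Free G) (u : V) :
    ∑ v ∈ G.neighborFinset u, ∑ w ∈ G.neighborFinset u ∩ G.neighborFinset v, G.degree w ≤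
      G.neighborDegreeSum u := by
  rw [sum_comm' (t' := G.neighborFinset u)
    (s' := fun w => G.neighborFinset u ∩ G.neighborFinset w)
    fun v w => by simp only [mem_inter, mem_neighborFinset, G.adj_comm v w]; tauto]
  refine sum_le_sum fun w hw => ?_
  rw [sum_const, smul_eq_mul]
  exact mul_le_of_le_one_left (Nat.zero_le _) (h.card_inter_neighborFinset_le_one
    ((G.mem_neighborFinset u w).1 hw).ne)

theorem C4Free.pairwiseDisjoint_neighborFinset_sdiff_of_adj (h4 : C4Free G) (h5 : C5Free G)
    {u v : V} (huv : G.Adj u v) :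
    ((G.neighborFinset u \ insert v (G.neighborFinset v) ∪
      G.neighborFinset v \ insert u (G.neighborFinset u) : Finset V) : Set V).PairwiseDisjoint
        fun x => G.neighborFinset x \ {u, v} := by
  have cross : ∀ x y z, G.Adj u x → x ≠ v → G.Adj v y → y ≠ u → x ≠ y →
      G.Adj x z → G.Adj y z → z ≠ u → z ≠ v → False :=
    fun x y z hux hxv hvy hyu hxy hxz hyz hzu hzv =>
      h5.false_of_adj hux hxz hyz.symm hvy.symm huv.symm hzu.symm hyu.symm hxy hxv hzv
  intro x hx y hy hxy
  refine disjoint_left.2 fun z hzx hzy => ?_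
  simp only [coe_union, Set.mem_union, mem_coe, mem_sdiff, mem_insert, mem_neighborFinset,
    mem_singleton, not_or] at hx hy hzx hzy
  obtain ⟨hxz, hzu, hzv⟩ := hzx
  obtain ⟨hyz, -⟩ := hzy
  rcases hx with ⟨hux, hxv, -⟩ | ⟨hvx, hxu, -⟩ <;>
    rcases hy with ⟨huy, hyv, -⟩ | ⟨hvy, hyu, -⟩
  · exact hxy (h4.eq_of_adj (Ne.symm hzu) hux hxz huy hyz)
  · exact cross x y z hux hxv hvy hyu hxy hxz hyz hzu hzv
  · exact cross y x z huy hyv hvx hxu (Ne.symm hxy) hyz hxz hzu hzv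
  · exact hxy (h4.eq_of_adj (Ne.symm hzv) hvx hxz hvy hyz)

theorem C4Free.neighborDegreeSum_add_le_of_adj (h4 : C4Free G) (h5 : C5Free G) {u v : V}
    (huv : G.Adj u v) :
    G.neighborDegreeSum u + G.neighborDegreeSum v ≤
      Fintype.card V + 3 * (G.degree u + G.degree v) +
        2 * ∑ w ∈ G.neighborFinset u ∩ G.neighborFinset v, G.degree w := by
  rw [neighborDegreeSum_eq_of_adj huv, neighborDegreeSum_eq_of_adj huv.symm,
    inter_comm (G.neighborFinset v)]
  set A := G.neighborFinset u \ insert v (G.neighborFinset v)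
  set B := G.neighborFinset v \ insert u (G.neighborFinset u)
  have hAB : Disjoint A B := disjoint_left.2 fun x hxA hxB => by
    simp only [A, B, mem_sdiff, mem_insert, not_or] at hxA hxB
    exact hxB.2.2 hxA.1
  have hsum : ∑ x ∈ A ∪ B, G.degree x ≤ Fintype.card V + #(A ∪ B) * #{u, v} :=
    G.sum_degree_le_of_pairwiseDisjoint (h4.pairwiseDisjoint_neighborFinset_sdiff_of_adj h5 huv)
  have hcard : #(A ∪ B) * #{u, v} ≤ 2 * (G.degree u + G.degree v) := by
    rw [card_union_of_disjoint hAB, mul_comm, ← card_neighborFinset_eq_degree,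
      ← card_neighborFinset_eq_degree]
    exact Nat.mul_le_mul card_le_two (add_le_add (card_le_card sdiff_subset)
      (card_le_card sdiff_subset))
  rw [sum_union hAB] at hsum
  omega

theorem C4Free.two_mul_sum_degree_mul_neighborDegreeSum_le (h4 : C4Free G) (h5 : C5Free G) :
    2 * ∑ v, G.degree v * G.neighborDegreeSum v ≤
      Fintype.card V * ∑ v, G.degree v + 8 * ∑ v, G.degree v ^ 2 := by
  set n := Fintype.card V
  calc 2 * ∑ v, G.degree v * G.neighborDegreeSum v
      = ∑ u, ∑ v ∈ G.neighborFinset u, (G.neighborDegreeSum u + G.neighborDegreeSum v) := by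
        simp only [sum_add_distrib, sum_sum_neighborFinset, sum_const,
          card_neighborFinset_eq_degree, smul_eq_mul]
        ring
    _ ≤ ∑ u, ∑ v ∈ G.neighborFinset u, (n + 3 * (G.degree u + G.degree v) +
          2 * ∑ w ∈ G.neighborFinset u ∩ G.neighborFinset v, G.degree w) :=
        sum_le_sum fun u _ => sum_le_sum fun v hv =>
          h4.neighborDegreeSum_add_le_of_adj h5 ((G.mem_neighborFinset u v).1 hv)
    _ ≤ ∑ u, (G.degree u * n + 3 * G.degree u ^ 2 + 5 * G.neighborDegreeSum u) := by
        refine sum_le_sum fun u _ => ?_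
        simp only [sum_add_distrib, ← mul_sum, sum_const, card_neighborFinset_eq_degree,
          smul_eq_mul]
        have := h4.sum_sum_inter_neighborFinset_le u
        rw [neighborDegreeSum] at this
        rw [neighborDegreeSum, sq]
        omega
    _ = n * ∑ v, G.degree v + 8 * ∑ v, G.degree v ^ 2 := by
        simp only [sum_add_distrib, ← mul_sum, ← sum_mul, sum_neighborDegreeSum]
        ring

theorem C4Free.eight_mul_card_edgeFinset_pow_three_le (h4 : C4Free G) (h5 : C5Free G) :
    8 * (#G.edgeFinset : ℝ) ^ 3 ≤ #G.edgeFinset * (Fintype.card V : ℝ) ^ 3 +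
      4 * (Fintype.card V : ℝ) ^ 4 + 8 * #G.edgeFinset * (Fintype.card V : ℝ) ^ 2 := by
  have hdeg : ∑ v, (G.degree v : ℝ) = 2 * #G.edgeFinset := by
    exact_mod_cast G.sum_degrees_eq_twice_card_edges
  have hW : 2 * ∑ v, (G.degree v : ℝ) * G.neighborDegreeSum v ≤
      Fintype.card V * ∑ v, (G.degree v : ℝ) + 8 * ∑ v, (G.degree v : ℝ) ^ 2 := by
    exact_mod_cast h4.two_mul_sum_degree_mul_neighborDegreeSum_le h5
  have hsq : ∑ v, (G.degree v : ℝ) ^ 2 ≤ Fintype.card V ^ 2 + ∑ v, (G.degree v : ℝ) := by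
    exact_mod_cast h4.sum_degree_sq_le
  have hcube := G.sum_degree_pow_three_le
  rw [hdeg] at hW hsq hcube
  linear_combination (2 * hcube +
    mul_le_mul_of_nonneg_left hW (sq_nonneg (Fintype.card V : ℝ)) +
    mul_le_mul_of_nonneg_left hsq (by positivity : 0 ≤ 8 * (Fintype.card V : ℝ) ^ 2)) / 2

theorem erdos_simonovits :
    ∀ ε : ℝ, 0 < ε → ∃ N : ℕ, ∀ n : ℕ, N ≤ n →
      ∀ G : SimpleGraph (Fin n), C4Free G → C5Free G →
        (G.edgeSet.ncard : ℝ) ≤ (1 / (2 * Real.sqrt 2) + ε) * (n : ℝ) ^ ((3 : ℝ) / 2) := by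
  intro ε hε
  refine ⟨⌈16 / ε ^ 2⌉₊ + 1, fun n hn G h4 h5 => ?_⟩
  classical
  have hsqrt : (n : ℝ) = Real.sqrt n ^ 2 := (Real.sq_sqrt n.cast_nonneg).symm
  have hr : 1 ≤ Real.sqrt n := Real.one_le_sqrt.2 (by exact_mod_cast le_of_add_le_right hn)
  have hεr : 4 ≤ ε * Real.sqrt n := by
    refine le_of_pow_le_pow_left₀ two_ne_zero (by positivity) ?_
    rw [mul_pow, ← hsqrt, ← div_le_iff₀' (by positivity)]
    exact (Nat.le_ceil _).trans (by exact_mod_cast Nat.le_of_succ_le hn)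
  have hcount := h4.eight_mul_card_edgeFinset_pow_three_le h5
  rw [Fintype.card_fin, hsqrt] at hcount
  rw [← coe_edgeFinset, Set.ncard_coe_finset, Real.rpow_div_two_eq_sqrt _ n.cast_nonneg,
    Real.rpow_ofNat]
  exact le_of_eight_mul_pow_three_le hr hεr (by linear_combination hcount)
end
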